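/- arXiv:2102.07300 — 5 statements merged into one kernel-verified Lean document; each statement's English description precedes it below -/
import Mathlib

section
/- (Numerical Lemma 4.1) Under the hypotheses below, A(2g) = 1 and B(2g−1) = 1. -/
/-- `(a,b,c)` is an exact-triangle triple if it splits as `a = x+y`, `b = y+z`, `c = z+x`. -/
def ExactTriangleTriple (a b c : ℕ) : Prop :=
  ∃ x y z : ℕ, a = x + y ∧ b = y + z ∧ c = z + x

theorem numerical_lemma_top_gradings
    (g : ℤ) (hg : 2 ≤ g) (K A B : ℤ → ℕ)
    (hK : ∀ i : ℤ, K i = if i = -g ∨ i = 1 - g ∨ i = 0 ∨ i = g - 1 ∨ i = g then 1 else 0)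
    (hAsym : ∀ i : ℤ, A i = A (-i)) (hAvan : ∀ i : ℤ, 2 * g < |i| → A i = 0)
    (hAtop : A (2 * g) ≠ 0)
    (hBsym : ∀ i : ℤ, B i = B (-1 - i))
    (hBvan : ∀ i : ℤ, (2 * g ≤ i ∨ i ≤ -2 * g - 1) → B i = 0)
    (hBtop : B (2 * g - 1) ≠ 0)
    (hT1 : ∀ i : ℤ, ExactTriangleTriple (B i) (A i) (K (i - g)))
    (hT2 : ∀ i : ℤ, ExactTriangleTriple (B (i - 1)) (A i) (K (i + g))) :
    A (2 * g) = 1 ∧ B (2 * g - 1) = 1 := by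
  obtain ⟨x, y, z, h1, h2, h3⟩ := hT1 (2 * g)
  have hB0 : B (2 * g) = 0 := hBvan _ (Or.inl le_rfl)
  have hKg : K (2 * g - g) = 1 := by
    rw [hK, if_pos (by omega)]
  have hA1 : A (2 * g) = 1 := by omega
  obtain ⟨x', y', z', h1', h2', h3'⟩ := hT2 (2 * g)
  have hK0 : K (2 * g + g) = 0 := by
    rw [hK, if_neg (by omega)]
  refine ⟨hA1, ?_⟩
  rw [hA1] at h2'
  omega
end

section
/- (Numerical Lemma 4.3, identifying gradings) Under the hypotheses below, A(i) = B(i−1) for every integer i > 1. -/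
theorem numerical_lemma_identifying_gradings
    (g : ℤ) (hg : 2 ≤ g) (K A B : ℤ → ℕ)
    (hK : ∀ i : ℤ, g < |i| → K i = 0)
    (hAsym : ∀ i : ℤ, A i = A (-i))
    (hBsym : ∀ i : ℤ, B i = B (-1 - i))
    (hT1 : ∀ i : ℤ, ExactTriangleTriple (B i) (A i) (K (i - g))) :
    ∀ i : ℤ, 1 < i → A i = B (i - 1) := by
  intro i hi
  have hK0 : K (-i - g) = 0 := by
    apply hK
    have : |(-i - g)| = i + g := by
      rw [abs_of_nonpos (by linarith)]; ring
    rw [this]; linarith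
  obtain ⟨x, y, z, hB, hA, hKxz⟩ := hT1 (-i)
  rw [hK0] at hKxz
  have hz : z = 0 := by omega
  have hx : x = 0 := by omega
  have h1 : A (-i) = B (-i) := by rw [hA, hB, hx, hz]; omega
  rw [hAsym i, h1, hBsym (-i)]
  ring_nf
end

section
/- (Numerical Lemma 4.4, complete gradings) Under the hypotheses below, A(i) = 0 for all integers i with g+1 ≤ i ≤ 2g−1, and A(i) = 1 for all integers i with 2 ≤ i ≤ g. -/
lemma ett_zero {a b : ℕ} (h : ExactTriangleTriple a b 0) : a = b := by
  obtain ⟨x, y, z, h1, h2, h3⟩ := h; omega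

lemma ett_one {a b : ℕ} (h : ExactTriangleTriple a b 1) : a = b + 1 ∨ b = a + 1 := by
  obtain ⟨x, y, z, h1, h2, h3⟩ := h; omega

theorem numerical_lemma_complete_gradings
    (g : ℤ) (hg : 2 ≤ g) (K A B : ℤ → ℕ)
    (hK : ∀ i : ℤ, K i = if i = -g ∨ i = 1 - g ∨ i = 0 ∨ i = g - 1 ∨ i = g then 1 else 0)
    (hAsym : ∀ i : ℤ, A i = A (-i)) (hAvan : ∀ i : ℤ, 2 * g < |i| → A i = 0)
    (hAtop : A (2 * g) ≠ 0) (hA0 : A 0 = 1)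
    (hBsym : ∀ i : ℤ, B i = B (-1 - i))
    (hBvan : ∀ i : ℤ, (2 * g ≤ i ∨ i ≤ -2 * g - 1) → B i = 0)
    (hBtop : B (2 * g - 1) ≠ 0)
    (hT1 : ∀ i : ℤ, ExactTriangleTriple (B i) (A i) (K (i - g)))
    (hT2 : ∀ i : ℤ, ExactTriangleTriple (B (i - 1)) (A i) (K (i + g)))
    (hpsi : K (g - 1) = A (2 * g - 1) + B (2 * g - 1)) :
    (∀ i : ℤ, g + 1 ≤ i → i ≤ 2 * g - 1 → A i = 0) ∧
    (∀ i : ℤ, 2 ≤ i → i ≤ g → A i = 1) := by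
  -- If K(i-g)=0 then A i = B i
  have eqAB : ∀ i : ℤ, i ≠ 0 → i ≠ 1 → i ≠ g → i ≠ 2*g - 1 → i ≠ 2*g → A i = B i := by
    intro i h0 h1 h2 h3 h4
    have hk : K (i - g) = 0 := by rw [hK]; split <;> omega
    have h := hT1 i
    rw [hk] at h
    exact (ett_zero h).symm
  -- If i ≥ 1 then A i = B (i-1)
  have eqAB' : ∀ i : ℤ, 1 ≤ i → A i = B (i - 1) := by
    intro i hi
    have hk : K (i + g) = 0 := by rw [hK]; split <;> omega
    have h := hT2 i
    rw [hk] at h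
    exact (ett_zero h).symm
  have step : ∀ i : ℤ, 2 ≤ i → i ≠ g → i ≠ 2*g - 1 → i ≠ 2*g → A i = A (i + 1) := by
    intro i h2 hg1 hg2 hg3
    have e1 := eqAB i (by omega) (by omega) hg1 hg2 hg3
    have e2 := eqAB' (i + 1) (by omega)
    simp only [add_sub_cancel_right] at e2
    omega
  have hA2g : A (2*g) = 1 := by
    have hk : K (2*g - g) = 1 := by rw [hK]; split <;> omega
    have hb : B (2*g) = 0 := hBvan _ (by omega)
    have h := hT1 (2*g)
    rw [hk, hb] at h
    rcases ett_one h with h | h <;> omega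
  have hB2g1 : B (2*g - 1) = 1 := by
    have h := eqAB' (2*g) (by omega)
    omega
  have hA2g1 : A (2*g - 1) = 0 := by
    have hk : K (g - 1) = 1 := by rw [hK]; split <;> omega
    omega
  have part1 : ∀ i : ℤ, g + 1 ≤ i → i ≤ 2*g - 1 → A i = 0 := by
    have key : ∀ n : ℕ, ∀ i : ℤ, g + 1 ≤ i → i = 2*g - 1 - n → A i = 0 := by
      intro n
      induction n with
      | zero =>
        intro i h1 h2
        have hi : i = 2*g - 1 := by omega
        rw [hi]; exact hA2g1
      | succ n ih =>
        intro i h1 h2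
        have hs := step i (by omega) (by omega) (by omega) (by omega)
        rw [hs]
        exact ih (i + 1) (by omega) (by omega)
    intro i h1 h2
    exact key (2*g - 1 - i).toNat i h1 (by omega)
  have hAg : A g = 1 := by
    have hBg : B g = 0 := by
      have h1 := eqAB' (g + 1) (by omega)
      have h2 := part1 (g + 1) (by omega) (by omega)
      simp only [add_sub_cancel_right] at h1
      omega
    have hk : K (g - g) = 1 := by rw [hK]; split <;> omega
    have h := hT1 g
    rw [hk, hBg] at h
    rcases ett_one h with h | h <;> omega
  have part2 : ∀ i : ℤ, 2 ≤ i → i ≤ g → A i = 1 := by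
    have key : ∀ n : ℕ, ∀ i : ℤ, 2 ≤ i → i = g - n → A i = 1 := by
      intro n
      induction n with
      | zero =>
        intro i h1 h2
        have hi : i = g := by omega
        rw [hi]; exact hAg
      | succ n ih =>
        intro i h1 h2
        have hs := step i (by omega) (by omega) (by omega) (by omega)
        rw [hs]
        exact ih (i + 1) (by omega) (by omega)
    intro i h1 h2
    exact key (g - i).toNat i h1 (by omega)
  exact ⟨part1, part2⟩
end

section
/- (Numerical Lemma 4.5) Under the hypotheses below, D(i) = 1 for every integer i with −g ≤ i ≤ g. -/
lemma ett_elim {a b c : ℕ} (h : ExactTriangleTriple a b c) :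
    2 ∣ (a + b + c) ∧ a ≤ b + c ∧ b ≤ a + c ∧ c ≤ a + b := by
  obtain ⟨x, y, z, rfl, rfl, rfl⟩ := h
  omega

theorem numerical_lemma_middle
    (g : ℤ) (hg : 2 ≤ g) (K A B : ℤ → ℕ)
    (hK : ∀ i : ℤ, K i = if i = -g ∨ i = 1 - g ∨ i = 0 ∨ i = g - 1 ∨ i = g then 1 else 0)
    (hAsym : ∀ i : ℤ, A i = A (-i)) (hAvan : ∀ i : ℤ, 2 * g < |i| → A i = 0)
    (hAtop : A (2 * g) ≠ 0) (hA0 : A 0 = 1)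
    (hBsym : ∀ i : ℤ, B i = B (-1 - i))
    (hBvan : ∀ i : ℤ, (2 * g ≤ i ∨ i ≤ -2 * g - 1) → B i = 0)
    (hBtop : B (2 * g - 1) ≠ 0)
    (hT1 : ∀ i : ℤ, ExactTriangleTriple (B i) (A i) (K (i - g)))
    (hT2 : ∀ i : ℤ, ExactTriangleTriple (B (i - 1)) (A i) (K (i + g)))
    (hpsi : K (g - 1) = A (2 * g - 1) + B (2 * g - 1))
    (D : ℤ → ℕ)
    (hT3 : ∀ i : ℤ, ExactTriangleTriple (B (g + i)) (D i) (A (i - g)))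
    (hDsym : ∀ i : ℤ, D i = D (-i)) :
    ∀ i : ℤ, -g ≤ i → i ≤ g → D i = 1 := by
  have KZ : ∀ i : ℤ, ¬(i = -g ∨ i = 1 - g ∨ i = 0 ∨ i = g - 1 ∨ i = g) → K i = 0 := by
    intro i h; rw [hK, if_neg h]
  have KO : ∀ i : ℤ, (i = -g ∨ i = 1 - g ∨ i = 0 ∨ i = g - 1 ∨ i = g) → K i = 1 := by
    intro i h; rw [hK, if_pos h]
  -- Step 0: values at the top
  have hKg1 : K (g - 1) = 1 := KO _ (by omega)
  have hA2g1 : A (2 * g - 1) = 0 := by omega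
  have hB2g1 : B (2 * g - 1) = 1 := by omega
  -- B (2g-2) = 0
  have hB2g2 : B (2 * g - 2) = 0 := by
    have h := ett_elim (hT2 (2 * g - 1))
    have hk : K (2 * g - 1 + g) = 0 := KZ _ (by omega)
    have e : (2 : ℤ) * g - 1 - 1 = 2 * g - 2 := by ring
    rw [e, hk, hA2g1] at h
    omega
  -- L1 : downward chain of zeros from 2g-1 to g+1
  have L1 : ∀ n : ℕ, (n : ℤ) ≤ g - 2 → A (2 * g - 1 - n) = 0 ∧ B (2 * g - 2 - n) = 0 := by
    intro n
    induction n with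
    | zero =>
      intro _
      simpa using ⟨hA2g1, hB2g2⟩
    | succ n ih =>
      intro hn
      have hn' : (n : ℤ) + 1 ≤ g - 2 := by push_cast at hn; omega
      obtain ⟨_, hB'⟩ := ih (by omega)
      set j : ℤ := 2 * g - 2 - n with hj
      have hAj : A j = 0 := by
        have h := ett_elim (hT1 j)
        have hk : K (j - g) = 0 := KZ _ (by omega)
        rw [hk, hB'] at h
        omega
      have hBj : B (j - 1) = 0 := by
        have h := ett_elim (hT2 j)
        have hk : K (j + g) = 0 := KZ _ (by omega)
        rw [hk, hAj] at h
        omega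
      have e1 : 2 * g - 1 - ((n : ℤ) + 1) = j := by rw [hj]; ring
      have e2 : 2 * g - 2 - ((n : ℤ) + 1) = j - 1 := by rw [hj]; ring
      push_cast
      rw [e1, e2]
      exact ⟨hAj, hBj⟩
  -- B g = 0
  have hBg : B g = 0 := by
    have h := (L1 (g - 2).toNat (by omega)).2
    have e : 2 * g - 2 - ((g - 2).toNat : ℤ) = g := by omega
    rwa [e] at h
  -- A g = 1
  have hAg : A g = 1 := by
    have h := ett_elim (hT1 g)
    have hk : K (g - g) = 1 := KO _ (by omega)
    rw [hk, hBg] at h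
    omega
  -- B (g-1) = 1
  have hBg1 : B (g - 1) = 1 := by
    have h := ett_elim (hT2 g)
    have hk : K (g + g) = 0 := KZ _ (by omega)
    rw [hk, hAg] at h
    omega
  -- L3 : downward chain of ones from g to 2
  have L3 : ∀ n : ℕ, (n : ℤ) ≤ g - 2 → A (g - n) = 1 ∧ B (g - 1 - n) = 1 := by
    intro n
    induction n with
    | zero =>
      intro _
      simpa using ⟨hAg, hBg1⟩
    | succ n ih =>
      intro hn
      have hn' : (n : ℤ) + 1 ≤ g - 2 := by push_cast at hn; omega
      obtain ⟨_, hB'⟩ := ih (by omega)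
      set j : ℤ := g - 1 - n with hj
      have hAj : A j = 1 := by
        have h := ett_elim (hT1 j)
        have hk : K (j - g) = 0 := KZ _ (by omega)
        rw [hk, hB'] at h
        omega
      have hBj : B (j - 1) = 1 := by
        have h := ett_elim (hT2 j)
        have hk : K (j + g) = 0 := KZ _ (by omega)
        rw [hk, hAj] at h
        omega
      have e1 : g - ((n : ℤ) + 1) = j := by rw [hj]; ring
      have e2 : g - 1 - ((n : ℤ) + 1) = j - 1 := by rw [hj]; ring
      push_cast
      rw [e1, e2]
      exact ⟨hAj, hBj⟩
  -- main claim for nonnegative i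
  have key : ∀ i : ℤ, 0 ≤ i → i ≤ g → D i = 1 := by
    intro i h0 h1
    by_cases hig : i = g
    · rw [hig]
      have h := ett_elim (hT3 g)
      have hB2g : B (g + g) = 0 := hBvan _ (by omega)
      have e : g - g = 0 := by ring
      rw [hB2g, e, hA0] at h
      omega
    · by_cases hig1 : i = g - 1
      · rw [hig1]
        have h := ett_elim (hT3 (1 - g))
        have e1 : g + (1 - g) = 1 := by ring
        have hB1 : B 1 = 1 := by
          have h2 := (L3 (g - 2).toNat (by omega)).2
          have e : g - 1 - ((g - 2).toNat : ℤ) = 1 := by omega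
          rwa [e] at h2
        have hA' : A (1 - g - g) = 0 := by
          rw [hAsym]
          have e : -(1 - g - g) = 2 * g - 1 := by ring
          rw [e]; exact hA2g1
        rw [e1, hB1, hA'] at h
        have e2 : -(1 - g) = g - 1 := by ring
        rw [hDsym (g - 1)]
        rw [show (-(g - 1) : ℤ) = 1 - g by ring]
        omega
      · -- 0 ≤ i ≤ g - 2
        have hi2 : i ≤ g - 2 := by omega
        have h := ett_elim (hT3 i)
        have hBgi : B (g + i) = 0 := by
          have h2 := (L1 (g - 2 - i).toNat (by omega)).2
          have e : 2 * g - 2 - ((g - 2 - i).toNat : ℤ) = g + i := by omega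
          rwa [e] at h2
        have hAgi : A (i - g) = 1 := by
          rw [hAsym]
          have h2 := (L3 i.toNat (by omega)).1
          have e : g - (i.toNat : ℤ) = -(i - g) := by omega
          rwa [e] at h2
        rw [hBgi, hAgi] at h
        omega
  intro i hi1 hi2
  by_cases h0 : 0 ≤ i
  · exact key i h0 hi2
  · rw [hDsym i]
    exact key (-i) (by omega) (by omega)
end

section
/- (Numerical form of the main theorem) Under the hypotheses below, the sum ∑_{i=−g}^{g} D(i) equals 2g+1. (In the paper this computes dim I♯(S³_{−2g−1}(K)) = 2g+1, showing K admits an instanton L-space surgery.) -/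
namespace ExactTriangleTriple

variable {a b c : ℕ}

theorem eq_of_right_eq_zero (h : ExactTriangleTriple a b c) (hc : c = 0) : a = b := by
  obtain ⟨x, y, z, rfl, rfl, rfl⟩ := h
  omega

theorem eq_of_left_eq_zero (h : ExactTriangleTriple a b c) (ha : a = 0) : b = c := by
  obtain ⟨x, y, z, rfl, rfl, rfl⟩ := h
  omega

end ExactTriangleTriple

theorem Int.apply_eq_apply_of_succ_eq {α : Type*} {f : ℤ → α} {m n : ℤ}
    (h : ∀ i, m ≤ i → i < n → f (i + 1) = f i) {j k : ℤ} (hj : j ∈ Set.Icc m n)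
    (hk : k ∈ Set.Icc m n) : f j = f k := by
  have from_bottom : ∀ j, m ≤ j → j ≤ n → f j = f m := by
    intro j hmj
    induction j, hmj using Int.leInduction with
    | base => exact fun _ => rfl
    | succ i hmi ih => exact fun hin => (h i hmi (by omega)).trans (ih (by omega))
  exact (from_bottom j hj.1 hj.2).trans (from_bottom k hk.1 hk.2).symm

theorem sum_Icc_neg_eq_of_symm_of_eq_one {D : ℤ → ℕ} {g : ℤ} (hg : 0 ≤ g)
    (hDsym : ∀ i, D i = D (-i)) (hD : ∀ i, 0 ≤ i → i ≤ g → D i = 1) :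
    ((∑ i ∈ Finset.Icc (-g) g, D i : ℕ) : ℤ) = 2 * g + 1 := by
  have hone : ∀ i ∈ Finset.Icc (-g) g, D i = 1 := by
    intro i hi
    rw [Finset.mem_Icc] at hi
    rcases le_or_gt 0 i with h0i | hi0
    · exact hD i h0i hi.2
    · rw [hDsym]; exact hD (-i) (by omega) (by omega)
  rw [Finset.sum_congr rfl hone, Finset.sum_const, smul_eq_mul, mul_one, Int.card_Icc]
  omega

section Propagation

variable {g : ℤ} {K A B : ℤ → ℕ}

theorem A_succ_eq
    (hK : ∀ i : ℤ, K i = if i = -g ∨ i = 1 - g ∨ i = 0 ∨ i = g - 1 ∨ i = g then 1 else 0)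
    (hT1 : ∀ i : ℤ, ExactTriangleTriple (B i) (A i) (K (i - g)))
    (hT2 : ∀ i : ℤ, ExactTriangleTriple (B (i - 1)) (A i) (K (i + g)))
    {i : ℤ} (hi : 2 ≤ i ∧ i < g ∨ g < i ∧ i < 2 * g - 1) : A (i + 1) = A i := by
  have hBA : B i = A i := (hT1 i).eq_of_right_eq_zero (by rw [hK, if_neg (by omega)])
  have hBA' : B i = A (i + 1) := by
    simpa using (hT2 (i + 1)).eq_of_right_eq_zero (by rw [hK, if_neg (by omega)])
  exact hBA'.symm.trans hBA

theorem A_eq_zero_of_lt_of_le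
    (hK : ∀ i : ℤ, K i = if i = -g ∨ i = 1 - g ∨ i = 0 ∨ i = g - 1 ∨ i = g then 1 else 0)
    (hT1 : ∀ i : ℤ, ExactTriangleTriple (B i) (A i) (K (i - g)))
    (hT2 : ∀ i : ℤ, ExactTriangleTriple (B (i - 1)) (A i) (K (i + g)))
    (hA : A (2 * g - 1) = 0) {j : ℤ} (hgj : g < j) (hj : j ≤ 2 * g - 1) : A j = 0 := by
  rw [← hA]
  exact Int.apply_eq_apply_of_succ_eq (fun i hgi hi => A_succ_eq hK hT1 hT2 (.inr ⟨hgi, hi⟩))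
    ⟨by omega, hj⟩ ⟨by omega, le_rfl⟩

theorem B_eq_zero_of_le_of_le
    (hK : ∀ i : ℤ, K i = if i = -g ∨ i = 1 - g ∨ i = 0 ∨ i = g - 1 ∨ i = g then 1 else 0)
    (hT1 : ∀ i : ℤ, ExactTriangleTriple (B i) (A i) (K (i - g)))
    (hT2 : ∀ i : ℤ, ExactTriangleTriple (B (i - 1)) (A i) (K (i + g)))
    (hA : A (2 * g - 1) = 0) {j : ℤ} (hgj : g ≤ j) (hj : j ≤ 2 * g - 2) : B j = 0 := by
  have hBA : B j = A (j + 1) := by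
    simpa using (hT2 (j + 1)).eq_of_right_eq_zero (by rw [hK, if_neg (by omega)])
  rw [hBA, A_eq_zero_of_lt_of_le hK hT1 hT2 hA (by omega) (by omega)]

theorem A_eq_one_of_le_of_le
    (hK : ∀ i : ℤ, K i = if i = -g ∨ i = 1 - g ∨ i = 0 ∨ i = g - 1 ∨ i = g then 1 else 0)
    (hT1 : ∀ i : ℤ, ExactTriangleTriple (B i) (A i) (K (i - g)))
    (hT2 : ∀ i : ℤ, ExactTriangleTriple (B (i - 1)) (A i) (K (i + g)))
    (hA : A (2 * g - 1) = 0) {j : ℤ} (h2j : 2 ≤ j) (hj : j ≤ g) : A j = 1 := by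
  have hBg : B g = 0 := B_eq_zero_of_le_of_le hK hT1 hT2 hA le_rfl (by omega)
  have hAg : A g = 1 := by
    simpa [hK] using (hT1 g).eq_of_left_eq_zero hBg
  rw [← hAg]
  exact Int.apply_eq_apply_of_succ_eq (fun i h2i hi => A_succ_eq hK hT1 hT2 (.inl ⟨h2i, hi⟩))
    ⟨h2j, hj⟩ ⟨by omega, le_rfl⟩

theorem B_one_eq_one (hg : 2 ≤ g)
    (hK : ∀ i : ℤ, K i = if i = -g ∨ i = 1 - g ∨ i = 0 ∨ i = g - 1 ∨ i = g then 1 else 0)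
    (hT1 : ∀ i : ℤ, ExactTriangleTriple (B i) (A i) (K (i - g)))
    (hT2 : ∀ i : ℤ, ExactTriangleTriple (B (i - 1)) (A i) (K (i + g)))
    (hA : A (2 * g - 1) = 0) : B 1 = 1 := by
  have hBA : B 1 = A 2 := by
    simpa using (hT2 2).eq_of_right_eq_zero (by rw [hK, if_neg (by omega)])
  rw [hBA, A_eq_one_of_le_of_le hK hT1 hT2 hA le_rfl hg]

end Propagation

theorem numerical_main_theorem_general
    (g : ℤ) (hg : 2 ≤ g) (K A B : ℤ → ℕ)
    (hK : ∀ i : ℤ, K i = if i = -g ∨ i = 1 - g ∨ i = 0 ∨ i = g - 1 ∨ i = g then 1 else 0)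
    (hAsym : ∀ i : ℤ, A i = A (-i))
    (hA0 : A 0 = 1)
    (hBvan : ∀ i : ℤ, (2 * g ≤ i ∨ i ≤ -2 * g - 1) → B i = 0)
    (hBtop : B (2 * g - 1) ≠ 0)
    (hT1 : ∀ i : ℤ, ExactTriangleTriple (B i) (A i) (K (i - g)))
    (hT2 : ∀ i : ℤ, ExactTriangleTriple (B (i - 1)) (A i) (K (i + g)))
    (hpsi : K (g - 1) = A (2 * g - 1) + B (2 * g - 1))
    (D : ℤ → ℕ)
    (hT3 : ∀ i : ℤ, ExactTriangleTriple (B (g + i)) (D i) (A (i - g)))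
    (hDsym : ∀ i : ℤ, D i = D (-i)) :
    ((∑ i ∈ Finset.Icc (-g) g, D i : ℕ) : ℤ) = 2 * g + 1 := by
  have hA : A (2 * g - 1) = 0 := by
    have hKg : K (g - 1) = 1 := by rw [hK, if_pos (by omega)]
    omega
  refine sum_Icc_neg_eq_of_symm_of_eq_one (by omega) hDsym fun i h0i hig => ?_
  obtain rfl | rfl | hi : i = g ∨ i = g - 1 ∨ i ≤ g - 2 := by omega
  · simpa [hA0] using (hT3 i).eq_of_left_eq_zero (hBvan _ (.inl (by omega)))
  · have hA' : A (1 - g - g) = 0 := by rw [hAsym, ← hA]; congr 1; ring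
    have hD' := (hT3 (1 - g)).eq_of_right_eq_zero hA'
    rw [hDsym, neg_sub, ← hD', add_sub_cancel, B_one_eq_one hg hK hT1 hT2 hA]
  · have hB : B (g + i) = 0 := B_eq_zero_of_le_of_le hK hT1 hT2 hA (by omega) (by omega)
    have hAi : A (i - g) = 1 := by
      rw [hAsym, neg_sub]; exact A_eq_one_of_le_of_le hK hT1 hT2 hA (by omega) (by omega)
    rw [(hT3 i).eq_of_left_eq_zero hB, hAi]

theorem numerical_main_theorem
    (g : ℤ) (hg : 2 ≤ g) (K A B : ℤ → ℕ)
    (hK : ∀ i : ℤ, K i = if i = -g ∨ i = 1 - g ∨ i = 0 ∨ i = g - 1 ∨ i = g then 1 else 0)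
    (hAsym : ∀ i : ℤ, A i = A (-i)) (hAvan : ∀ i : ℤ, 2 * g < |i| → A i = 0)
    (hAtop : A (2 * g) ≠ 0) (hA0 : A 0 = 1)
    (hBsym : ∀ i : ℤ, B i = B (-1 - i))
    (hBvan : ∀ i : ℤ, (2 * g ≤ i ∨ i ≤ -2 * g - 1) → B i = 0)
    (hBtop : B (2 * g - 1) ≠ 0)
    (hT1 : ∀ i : ℤ, ExactTriangleTriple (B i) (A i) (K (i - g)))
    (hT2 : ∀ i : ℤ, ExactTriangleTriple (B (i - 1)) (A i) (K (i + g)))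
    (hpsi : K (g - 1) = A (2 * g - 1) + B (2 * g - 1))
    (D : ℤ → ℕ)
    (hT3 : ∀ i : ℤ, ExactTriangleTriple (B (g + i)) (D i) (A (i - g)))
    (hDsym : ∀ i : ℤ, D i = D (-i)) :
    ((∑ i ∈ Finset.Icc (-g) g, D i : ℕ) : ℤ) = 2 * g + 1 :=
  numerical_main_theorem_general g hg K A B hK hAsym hA0 hBvan hBtop hT1 hT2 hpsi D hT3 hDsym
end
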